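/- arXiv:1505.06562 — 2 statements merged into one kernel-verified Lean document; each statement's English description precedes it below -/
import Mathlib

section
/- If for all ε ∈ (0,1), Pr{Viol(θ_SO) > ε} ≤ B(N,ε,n_θ) where B(N,ε,n) = Σ_{k=0}^{n-1} C(N,k) ε^k (1-ε)^{N-k}, and N ≥ (e/(ε(e-1)))(ln(1/δ) + n_θ - 1), then B(N,ε,n_θ) ≤ δ, i.e., the sample complexity bound implies the binomial tail bound is at most δ. -/
open Finset in
/-- The binomial tail `B(N, ε, n) = ∑_{k=0}^{n-1} C(N,k) ε^k (1-ε)^{N-k}`. -/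
def binTail (N : ℕ) (ε : ℝ) (n : ℕ) : ℝ :=
  ∑ k ∈ Finset.range n, (N.choose k : ℝ) * ε ^ k * (1 - ε) ^ (N - k)

/-!
Chernoff-style tilting: for `t ≥ 1` every term of `B(N, ε, n)` with `k < n` satisfies
`ε ^ k ≤ t ^ (n - 1) (ε / t) ^ k`, so `B(N, ε, n) ≤ t ^ (n - 1) (ε / t + 1 - ε) ^ N` by the binomial
theorem, and `ε / t + 1 - ε ≤ exp (-ε (1 - 1 / t))`. The choice `t = e` gives
`B(N, ε, n) ≤ exp (n - 1 - N ε (e - 1) / e)`, which is at most `δ` exactly under the hypothesis on `N`.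
-/

open Finset Real

lemma sum_range_choose_mul_pow_le_add_pow {x y : ℝ} (hx : 0 ≤ x) (hy : 0 ≤ y) (N n : ℕ) :
    ∑ k ∈ range n, (N.choose k : ℝ) * x ^ k * y ^ (N - k) ≤ (x + y) ^ N := by
  calc ∑ k ∈ range n, (N.choose k : ℝ) * x ^ k * y ^ (N - k)
      ≤ ∑ k ∈ range (max n (N + 1)), (N.choose k : ℝ) * x ^ k * y ^ (N - k) :=
        sum_le_sum_of_subset_of_nonneg (range_subset_range.2 (le_max_left _ _))
          fun _ _ _ => by positivity
    _ = ∑ k ∈ range (N + 1), (N.choose k : ℝ) * x ^ k * y ^ (N - k) := by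
        refine (sum_subset (range_subset_range.2 (le_max_right _ _)) fun k _ hk => ?_).symm
        rw [mem_range, not_lt] at hk
        simp [Nat.choose_eq_zero_of_lt (Nat.lt_of_succ_le hk)]
    _ = (x + y) ^ N := by
        rw [add_pow]
        exact sum_congr rfl fun _ _ => by ring

lemma binTail_le_pow_mul_pow {t ε : ℝ} (ht : 1 ≤ t) (hε0 : 0 ≤ ε) (hε1 : ε ≤ 1) (N n : ℕ) :
    binTail N ε n ≤ t ^ (n - 1) * (ε / t + (1 - ε)) ^ N := by
  have ht0 : 0 < t := zero_lt_one.trans_le ht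
  calc binTail N ε n
      ≤ ∑ k ∈ range n, t ^ (n - 1) * ((N.choose k : ℝ) * (ε / t) ^ k * (1 - ε) ^ (N - k)) := by
        refine sum_le_sum fun k hk => ?_
        have htk : t ^ k ≤ t ^ (n - 1) :=
          pow_le_pow_right₀ ht (Nat.le_sub_one_of_lt (mem_range.1 hk))
        calc (N.choose k : ℝ) * ε ^ k * (1 - ε) ^ (N - k)
            = t ^ k * ((N.choose k : ℝ) * (ε / t) ^ k * (1 - ε) ^ (N - k)) := by
              rw [div_pow]; field_simp
          _ ≤ _ := by gcongr
    _ ≤ t ^ (n - 1) * (ε / t + (1 - ε)) ^ N := by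
        rw [← mul_sum]
        gcongr
        exact sum_range_choose_mul_pow_le_add_pow (by positivity) (by linarith) N n

lemma binTail_le_pow_mul_exp {t ε : ℝ} (ht : 1 ≤ t) (hε0 : 0 ≤ ε) (hε1 : ε ≤ 1) (N n : ℕ) :
    binTail N ε n ≤ t ^ (n - 1) * exp (-(N * (ε * (1 - t⁻¹)))) := by
  have hbase : ε / t + (1 - ε) ≤ exp (-(ε * (1 - t⁻¹))) := by
    have := add_one_le_exp (-(ε * (1 - t⁻¹)))
    rw [div_eq_mul_inv]
    linarith
  have hbase0 : 0 ≤ ε / t + (1 - ε) := by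
    have : 0 ≤ ε / t := div_nonneg hε0 (zero_le_one.trans ht)
    linarith
  calc binTail N ε n ≤ t ^ (n - 1) * (ε / t + (1 - ε)) ^ N := binTail_le_pow_mul_pow ht hε0 hε1 N n
    _ ≤ t ^ (n - 1) * exp (-(ε * (1 - t⁻¹))) ^ N := by gcongr
    _ = t ^ (n - 1) * exp (-(N * (ε * (1 - t⁻¹)))) := by rw [← exp_nat_mul, mul_neg]

theorem stmt_3_general (ε δ : ℝ) (hε : ε ∈ Set.Ioo (0 : ℝ) 1) (hδ : δ ∈ Set.Ioo (0 : ℝ) 1)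
    (nθ : ℕ) (hn : 1 ≤ nθ) (N : ℕ)
    (h : (Real.exp 1 / (ε * (Real.exp 1 - 1))) * (Real.log (1 / δ) + nθ - 1) ≤ N) :
    binTail N ε nθ ≤ δ := by
  obtain ⟨hε0, hε1⟩ := hε
  have he1 : 1 < exp 1 := one_lt_exp_iff.2 one_pos
  have hrate : 0 < ε * (1 - (exp 1)⁻¹) := mul_pos hε0 (sub_pos.2 (inv_lt_one_of_one_lt₀ he1))
  have hsize : log (1 / δ) + nθ - 1 ≤ N * (ε * (1 - (exp 1)⁻¹)) := by
    have he1' : exp 1 - 1 ≠ 0 := (sub_pos.2 he1).ne'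
    calc log (1 / δ) + nθ - 1
        = exp 1 / (ε * (exp 1 - 1)) * (log (1 / δ) + nθ - 1) * (ε * (1 - (exp 1)⁻¹)) := by
          field_simp
      _ ≤ N * (ε * (1 - (exp 1)⁻¹)) := by gcongr
  have hpow : exp 1 ^ (nθ - 1) = exp (nθ - 1) := by
    rw [← exp_nat_mul, Nat.cast_sub hn, Nat.cast_one, mul_one]
  calc binTail N ε nθ ≤ exp 1 ^ (nθ - 1) * exp (-(N * (ε * (1 - (exp 1)⁻¹)))) :=
        binTail_le_pow_mul_exp he1.le hε0.le hε1.le N nθ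
    _ = exp (nθ - 1 - N * (ε * (1 - (exp 1)⁻¹))) := by rw [hpow, ← exp_add, ← sub_eq_add_neg]
    _ ≤ exp (log δ) := by
        rw [one_div, log_inv] at hsize
        exact exp_le_exp.2 (by linarith)
    _ = δ := exp_log hδ.1

/-- If `N ≥ (e/(ε(e-1)))(ln(1/δ) + n_θ - 1)` then `B(N, ε, n_θ) ≤ δ`. -/
theorem stmt_3 (ε δ : ℝ) (hε : ε ∈ Set.Ioo (0 : ℝ) 1) (hδ : δ ∈ Set.Ioo (0 : ℝ) 1)
    (nθ : ℕ) (hn : 1 ≤ nθ) (N : ℕ) (hN : 0 < N)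
    (h : (Real.exp 1 / (ε * (Real.exp 1 - 1))) * (Real.log (1 / δ) + nθ - 1) ≤ N) :
    binTail N ε nθ ≤ δ :=
  stmt_3_general ε δ hε hδ nθ hn N h
end

section
/- If Q is a symmetric positive definite n×n real matrix, s > 0, ū > 0, Y is a 1×n row vector, and the block matrix [[Q, Yᵀ],[Y, ū²/s²]] is positive semidefinite, then the ellipsoid E((s²Q)⁻¹) = {x : xᵀQ⁻¹x ≤ s²} is contained in the region {x : |Y Q⁻¹ x| ≤ ū}. -/
open Matrix

/-- Cauchy–Schwarz for a positive semidefinite real bilinear form. -/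
lemma psd_cauchy_schwarz {n : ℕ} {M : Matrix (Fin n) (Fin n) ℝ} (hM : M.PosSemidef)
    (u v : Fin n → ℝ) :
    (u ⬝ᵥ M.mulVec v) ^ 2 ≤ (u ⬝ᵥ M.mulVec u) * (v ⬝ᵥ M.mulVec v) := by
  have hsymm : ∀ a b : Fin n → ℝ, a ⬝ᵥ M.mulVec b = b ⬝ᵥ M.mulVec a := by
    intro a b
    have hMt : Mᵀ = M := by
      rw [← conjTranspose_eq_transpose_of_trivial, hM.isHermitian.eq]
    rw [dotProduct_mulVec, ← mulVec_transpose, dotProduct_comm, hMt]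
  have key : ∀ t : ℝ, 0 ≤ (v ⬝ᵥ M.mulVec v) * (t * t) + (2 * (u ⬝ᵥ M.mulVec v)) * t
      + (u ⬝ᵥ M.mulVec u) := by
    intro t
    have h0 : 0 ≤ (u + t • v) ⬝ᵥ M.mulVec (u + t • v) := by
      have := hM.dotProduct_mulVec_nonneg (u + t • v)
      simpa using this
    have hexp : (u + t • v) ⬝ᵥ M.mulVec (u + t • v)
        = (v ⬝ᵥ M.mulVec v) * (t * t) + (2 * (u ⬝ᵥ M.mulVec v)) * t + (u ⬝ᵥ M.mulVec u) := by
      rw [mulVec_add, dotProduct_add, add_dotProduct, add_dotProduct,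
        mulVec_smul, dotProduct_smul, smul_dotProduct, smul_dotProduct,
        hsymm v u]
      simp [smul_eq_mul]
      ring
    linarith [hexp ▸ h0]
  have hd := discrim_le_zero key
  rw [discrim] at hd
  nlinarith [hd]

/-- If `Q` is symmetric positive definite, `Y` a row vector, `ū, s > 0`, and the block
matrix `[[Q, Yᵀ],[Y, ū²/s²]]` is positive semidefinite, then with `H := Y Q⁻¹` the
ellipsoid `{x : xᵀ Q⁻¹ x ≤ s²}` is contained in `{x : |H x| ≤ ū}`. -/
theorem stmt_11 {n : ℕ} (Q : Matrix (Fin n) (Fin n) ℝ) (Y : Matrix (Fin 1) (Fin n) ℝ)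
    (ubar s : ℝ) (hubar : 0 < ubar) (hs : 0 < s)
    (hQ : Q.PosDef)
    (hblk : (Matrix.fromBlocks Q Yᵀ Y !![ubar ^ 2 / s ^ 2]).PosSemidef) :
    ∀ x : Fin n → ℝ, x ⬝ᵥ Q⁻¹.mulVec x ≤ s ^ 2 → |((Y * Q⁻¹).mulVec x) 0| ≤ ubar := by
  intro x hx
  have hMinv : (Q⁻¹).PosDef := hQ.inv
  letI := hQ.isUnit.invertible
  -- Schur complement
  have hYH : (Yᵀ)ᴴ = Y := by
    rw [conjTranspose_eq_transpose_of_trivial, transpose_transpose]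
  have hS : (!![ubar ^ 2 / s ^ 2] - Yᵀᴴ * Q⁻¹ * Yᵀ).PosSemidef := by
    rw [← Matrix.PosDef.fromBlocks₁₁ Yᵀ !![ubar ^ 2 / s ^ 2] hQ]
    rwa [hYH]
  rw [hYH] at hS
  -- entry bound
  have hc : (Y * Q⁻¹ * Yᵀ) 0 0 ≤ ubar ^ 2 / s ^ 2 := by
    have := hS.dotProduct_mulVec_nonneg (Pi.single 0 1)
    have hval : (Pi.single (0 : Fin 1) (1:ℝ)) ⬝ᵥ (!![ubar ^ 2 / s ^ 2] - Y * Q⁻¹ * Yᵀ).mulVec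
        (Pi.single 0 1) = ubar ^ 2 / s ^ 2 - (Y * Q⁻¹ * Yᵀ) 0 0 := by
      simp [mulVec, dotProduct, Fin.sum_univ_succ]
    simp only [star_trivial] at this
    rw [hval] at this
    linarith
  set a : Fin n → ℝ := fun j => Y 0 j with ha
  have hQsymm : (Q⁻¹)ᵀ = Q⁻¹ := by
    rw [← conjTranspose_eq_transpose_of_trivial, hMinv.isHermitian.eq]
  have haa : a ⬝ᵥ (Q⁻¹).mulVec a = (Y * Q⁻¹ * Yᵀ) 0 0 := by
    simp only [dotProduct, mulVec, Matrix.mul_apply, ha, Finset.mul_sum, Finset.sum_mul,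
      transpose_apply]
    rw [Finset.sum_comm]
    apply Finset.sum_congr rfl; intro i _
    apply Finset.sum_congr rfl; intro j _
    ring
  have hax : ((Y * Q⁻¹).mulVec x) 0 = a ⬝ᵥ (Q⁻¹).mulVec x := by
    simp only [dotProduct, mulVec, Matrix.mul_apply, ha, Finset.mul_sum, Finset.sum_mul]
    rw [Finset.sum_comm]
    apply Finset.sum_congr rfl; intro i _
    apply Finset.sum_congr rfl; intro j _
    ring
  have hcs := psd_cauchy_schwarz hMinv.posSemidef a x
  have hxx : 0 ≤ x ⬝ᵥ (Q⁻¹).mulVec x := by simpa using hMinv.posSemidef.dotProduct_mulVec_nonneg x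
  have hbound : (a ⬝ᵥ (Q⁻¹).mulVec x) ^ 2 ≤ ubar ^ 2 := by
    calc (a ⬝ᵥ (Q⁻¹).mulVec x) ^ 2 ≤ (a ⬝ᵥ (Q⁻¹).mulVec a) * (x ⬝ᵥ (Q⁻¹).mulVec x) := hcs
    _ ≤ (ubar ^ 2 / s ^ 2) * s ^ 2 := by
        apply mul_le_mul (by rw [haa]; exact hc) hx hxx
        positivity
    _ = ubar ^ 2 := by field_simp
  rw [hax]
  rw [abs_le]
  constructor <;> nlinarith [hbound]
end
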